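/- arXiv:1707.07461 — 3 statements merged into one kernel-verified Lean document; each statement's English description precedes it below -/
import Mathlib

section
/- Fix λ > 0. Define, for a probability measure ρ on ℝ, the probability measure Σ(ρ) = Σ_{n=0}^∞ (e^{−λ} λ^n / n!) · (h_{n+1})_*(ρ^{∗(n+1)}), where ρ^{∗m} is the m-fold convolution power of ρ, h_k : ℝ → ℝ is y ↦ y/k, and (h_k)_* is the pushforward. Then the map ρ ↦ Σ(ρ) is sequentially continuous on probability measures on ℝ: if ∫ φ dρ_n → ∫ φ dρ for every continuous compactly supported φ : ℝ → ℝ, then ∫ φ dΣ(ρ_n) → ∫ φ dΣ(ρ) for every continuous compactly supported φ. -/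
open MeasureTheory Filter

/-- The `n`-fold convolution power of a measure on `ℝ`, with `ρ^{∗0} = δ₀`. -/
noncomputable def convPow (ρ : Measure ℝ) : ℕ → Measure ℝ
  | 0 => Measure.dirac 0
  | n + 1 => (convPow ρ n).conv ρ

/-- `Σ(ρ) = Σ_{n=0}^∞ (e^{−λ} λ^n / n!) · (h_{n+1})_*(ρ^{∗(n+1)})`,
where `h_k(y) = y/k`. -/
noncomputable def SigmaTot (l : ℝ) (ρ : Measure ℝ) : Measure ℝ :=
  Measure.sum (fun n : ℕ =>
    ENNReal.ofReal (Real.exp (-l) * l ^ n / n.factorial) •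
      (convPow ρ (n + 1)).map (fun y => y / ((n : ℝ) + 1)))

/-- Vague convergence: convergence of the integrals against every continuous
compactly supported test function. -/
def VagueTendsto (ρs : ℕ → Measure ℝ) (ρ : Measure ℝ) : Prop :=
  ∀ φ : ℝ → ℝ, Continuous φ → HasCompactSupport φ →
    Tendsto (fun n => ∫ x, φ x ∂(ρs n)) atTop (nhds (∫ x, φ x ∂ρ))

/-!
Vague convergence to a probability measure is weak convergence, because no mass can escape:
integrals of a nonnegative bounded continuous `f` are bounded below by those of its compactly
supported truncations `f * χ`, which gives the liminf half of the portmanteau criterion.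
Weak convergence is preserved by products and continuous pushforwards, hence by convolution
powers and the rescalings `h_k`. The Poisson weights are summable and every term of the series
has integral at most `‖φ‖`, so dominated convergence passes the limit through the series `Σ`.
-/

open scoped Topology ENNReal BoundedContinuousFunction

theorem exists_seq_hasCompactSupport_eventually_eq_one (X : Type*) [TopologicalSpace X]
    [RegularSpace X] [LocallyCompactSpace X] [SigmaCompactSpace X] :
    ∃ χ : ℕ → C(X, ℝ), (∀ n, HasCompactSupport (χ n)) ∧ (∀ n x, χ n x ∈ Set.Icc 0 1) ∧
      ∀ x, ∀ᶠ n in atTop, χ n x = 1 := by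
  let K := CompactExhaustion.choice X
  choose χ hχK _ hχc hχI using fun n =>
    exists_continuous_one_zero_of_isCompact (K.isCompact n) isClosed_empty
      (Set.disjoint_empty _)
  refine ⟨χ, hχc, hχI, fun x => ?_⟩
  obtain ⟨N, hN⟩ := K.exists_mem x
  filter_upwards [eventually_ge_atTop N] with n hn using hχK n (K.subset hn hN)

namespace MeasureTheory.ProbabilityMeasure

theorem tendsto_of_forall_hasCompactSupport {X ι : Type*}
    [TopologicalSpace X] [RegularSpace X] [LocallyCompactSpace X] [SigmaCompactSpace X]
    [MeasurableSpace X] [OpensMeasurableSpace X] {L : Filter ι}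
    {μs : ι → ProbabilityMeasure X} {μ : ProbabilityMeasure X}
    (h : ∀ φ : X → ℝ, Continuous φ → HasCompactSupport φ →
      Tendsto (fun i => ∫ x, φ x ∂(μs i)) L (𝓝 (∫ x, φ x ∂μ))) :
    Tendsto μs L (𝓝 μ) := by
  rcases L.eq_or_neBot with rfl | hL
  · exact tendsto_bot
  rw [tendsto_iff_forall_integral_tendsto]
  refine BoundedContinuousFunction.tendsto_integral_of_forall_integral_le_liminf_integral
    fun f hf => ?_
  obtain ⟨χ, hχc, hχI, hχ_one⟩ := exists_seq_hasCompactSupport_eventually_eq_one X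
  have hcut_tendsto : Tendsto (fun n => ∫ x, f x * χ n x ∂μ) atTop (𝓝 (∫ x, f x ∂μ)) := by
    refine tendsto_integral_of_dominated_convergence (fun _ => ‖f‖)
      (fun n => (f.continuous.mul (χ n).continuous).aestronglyMeasurable)
      (integrable_const _) (fun n => ae_of_all _ fun x => ?_) (ae_of_all _ fun x => ?_)
    · rw [norm_mul, Real.norm_of_nonneg (hχI n x).1]
      exact (mul_le_mul (f.norm_coe_le_norm x) (hχI n x).2 (hχI n x).1 (norm_nonneg f)).trans_eq
        (mul_one _)
    · exact tendsto_const_nhds.congr' <| by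
        filter_upwards [hχ_one x] with n hn using by rw [hn, mul_one]
  have hbdd := BoundedContinuousFunction.isBounded_range_integral (fun i => (μs i : Measure X)) f
  refine le_of_tendsto hcut_tendsto (Eventually.of_forall fun n => ?_)
  rw [← (h (fun x => f x * χ n x) (by fun_prop) (hχc n).mul_left).liminf_eq]
  refine liminf_le_liminf (Eventually.of_forall fun i => integral_mono ?_ (f.integrable _)
      fun x => mul_le_of_le_one_right (hf x) (hχI n x).2)
    (isBoundedUnder_of ⟨0, fun i => integral_nonneg fun x => mul_nonneg (hf x) (hχI n x).1⟩)
    (BddAbove.isBoundedUnder L.univ_mem (by simpa using hbdd.bddAbove)).isCoboundedUnder_ge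
  exact (by fun_prop : Continuous fun x => f x * χ n x).integrable_of_hasCompactSupport
    (hχc n).mul_left

section Convolution

variable {M : Type*} [AddMonoid M] [MeasurableSpace M] [MeasurableAdd₂ M]

noncomputable def conv (μ ν : ProbabilityMeasure M) : ProbabilityMeasure M :=
  ⟨(μ : Measure M).conv ν, inferInstance⟩

@[simp]
theorem toMeasure_conv (μ ν : ProbabilityMeasure M) :
    (μ.conv ν : Measure M) = (μ : Measure M).conv ν := rfl

theorem continuous_conv [TopologicalSpace M] [ContinuousAdd M] [SecondCountableTopology M]
    [TopologicalSpace.PseudoMetrizableSpace M] [BorelSpace M] :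
    Continuous fun p : ProbabilityMeasure M × ProbabilityMeasure M => p.1.conv p.2 :=
  ((continuous_map continuous_add).comp continuous_prod).congr fun _ => Subtype.ext rfl

noncomputable def convPow (ρ : ProbabilityMeasure M) : ℕ → ProbabilityMeasure M
  | 0 => ⟨Measure.dirac 0, inferInstance⟩
  | n + 1 => (ρ.convPow n).conv ρ

theorem continuous_convPow [TopologicalSpace M] [ContinuousAdd M] [SecondCountableTopology M]
    [TopologicalSpace.PseudoMetrizableSpace M] [BorelSpace M] (n : ℕ) :
    Continuous fun ρ : ProbabilityMeasure M => ρ.convPow n := by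
  induction n with
  | zero => exact continuous_const
  | succ n ih => exact continuous_conv.comp (ih.prodMk continuous_id)

end Convolution

theorem toMeasure_convPow (ρ : ProbabilityMeasure ℝ) (n : ℕ) :
    (ρ.convPow n : Measure ℝ) = _root_.convPow ρ n := by
  induction n with
  | zero => rfl
  | succ n ih => rw [convPow, toMeasure_conv, ih, _root_.convPow]

end MeasureTheory.ProbabilityMeasure

section SumMeasure

variable {X : Type*} [MeasurableSpace X]

theorem isFiniteMeasure_sum_smul {c : ℕ → ℝ≥0∞} (hc : ∑' k, c k ≠ ∞)
    (μ : ℕ → ProbabilityMeasure X) :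
    IsFiniteMeasure (Measure.sum fun k => c k • (μ k : Measure X)) :=
  ⟨by simpa [Measure.sum_apply _ MeasurableSet.univ] using hc.lt_top⟩

variable [TopologicalSpace X] [OpensMeasurableSpace X]

theorem integral_sum_smul_eq_tsum {c : ℕ → ℝ≥0∞} (hc : ∑' k, c k ≠ ∞)
    (μ : ℕ → ProbabilityMeasure X) (f : X →ᵇ ℝ) :
    ∫ x, f x ∂(Measure.sum fun k => c k • (μ k : Measure X)) =
      ∑' k, (c k).toReal * ∫ x, f x ∂(μ k : Measure X) := by
  have := isFiniteMeasure_sum_smul hc μ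
  rw [integral_sum_measure (f.integrable _)]
  simp only [integral_smul_measure, smul_eq_mul]

theorem tendsto_integral_sum_smul {ι : Type*} {L : Filter ι} {c : ℕ → ℝ≥0∞} (hc : ∑' k, c k ≠ ∞)
    {μs : ι → ℕ → ProbabilityMeasure X} {μ : ℕ → ProbabilityMeasure X}
    (h : ∀ k, Tendsto (fun i => μs i k) L (𝓝 (μ k))) (f : X →ᵇ ℝ) :
    Tendsto (fun i => ∫ x, f x ∂(Measure.sum fun k => c k • (μs i k : Measure X))) L
      (𝓝 (∫ x, f x ∂(Measure.sum fun k => c k • (μ k : Measure X)))) := by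
  simp only [integral_sum_smul_eq_tsum hc]
  refine tendsto_tsum_of_dominated_convergence ((ENNReal.summable_toReal hc).mul_right ‖f‖)
    (fun k => ((ProbabilityMeasure.tendsto_iff_forall_integral_tendsto.mp (h k) f).const_mul _))
    (Eventually.of_forall fun i k => ?_)
  rw [norm_mul, Real.norm_of_nonneg ENNReal.toReal_nonneg]
  gcongr
  simpa using BoundedContinuousFunction.norm_integral_le_norm (μs i k : Measure X) f

end SumMeasure

theorem SigmaTot_sequentially_continuous_general
    (l : ℝ)
    (ρ : Measure ℝ) (ρs : ℕ → Measure ℝ)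
    (hρ : IsProbabilityMeasure ρ) (hρs : ∀ n, IsProbabilityMeasure (ρs n))
    (hconv : VagueTendsto ρs ρ) :
    VagueTendsto (fun n => SigmaTot l (ρs n)) (SigmaTot l ρ) := by
  intro φ hφ hφc
  let P : ℕ → ProbabilityMeasure ℝ := fun n => ⟨ρs n, hρs n⟩
  let P₀ : ProbabilityMeasure ℝ := ⟨ρ, hρ⟩
  have hweak : Tendsto P atTop (𝓝 P₀) :=
    ProbabilityMeasure.tendsto_of_forall_hasCompactSupport hconv
  have hscale (k : ℕ) : Continuous fun y : ℝ => y / ((k : ℝ) + 1) := continuous_id.div_const _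
  have hterms (k : ℕ) : Tendsto
      (fun n => ((P n).convPow (k + 1)).map (hscale k).measurable.aemeasurable)
      atTop (𝓝 ((P₀.convPow (k + 1)).map (hscale k).measurable.aemeasurable)) :=
    (((ProbabilityMeasure.continuous_map (hscale k)).comp
      (ProbabilityMeasure.continuous_convPow (k + 1))).tendsto _).comp hweak
  have hweights : ∑' k : ℕ, ENNReal.ofReal (Real.exp (-l) * l ^ k / k.factorial) ≠ ∞ := by
    -- `ofReal` truncates the weights that are negative when `l < 0`
    simp_rw [ENNReal.ofReal, mul_div_assoc]
    exact ENNReal.tsum_coe_ne_top_iff_summable.mpr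
      ((Real.summable_pow_div_factorial l).mul_left (Real.exp (-l))).toNNReal
  have := tendsto_integral_sum_smul hweights hterms (ofCompactSupport φ hφ hφc)
  simp only [ProbabilityMeasure.toMeasure_map, ProbabilityMeasure.toMeasure_convPow] at this
  exact this

theorem SigmaTot_sequentially_continuous
    (l : ℝ) (hl : 0 < l)
    (ρ : Measure ℝ) (ρs : ℕ → Measure ℝ)
    (hρ : IsProbabilityMeasure ρ) (hρs : ∀ n, IsProbabilityMeasure (ρs n))
    (hconv : VagueTendsto ρs ρ) :
    VagueTendsto (fun n => SigmaTot l (ρs n)) (SigmaTot l ρ) :=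
  SigmaTot_sequentially_continuous_general l ρ ρs hρ hρs hconv
end

section
/- Let f : ℝ → ℝ be continuous with |f(x)| ≤ a·cosh(b·x) for all x (a > 0, b ∈ ℝ), fix L > 0 and λ > 0, and for a probability measure ρ supported in [0, L] define F_ρ : [0, L] → ℝ by F_ρ(x) = Σ_{k=0}^∞ (e^{−λ} λ^k / (k+1)!) · ∫ f d(δ_x ∗ ρ^{∗k}). If ρ_n and ρ are probability measures supported in [0, L] and ρ_n → ρ weakly (∫ φ dρ_n → ∫ φ dρ for every bounded continuous φ), then F_{ρ_n} → F_ρ uniformly on [0, L]. Moreover the scalar quantities G_ρ = Σ_{k=0}^∞ (e^{−λ} λ^k / (k+1)!) · ∫ f d(ρ^{∗(k+1)}) satisfy G_{ρ_n} → G_ρ. -/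
/-!
For measures carried by a fixed compact interval, convergence of all moments is preserved by
convolution, since the moments of `μ ∗ ν` are bilinear in those of `μ` and `ν`. It also gives
convergence of `∫ f (x + y) dμₙ(y)` uniformly in `x` on compact sets: for a polynomial `p`,
Taylor expansion writes `∫ p (x + y) dμ(y)` as `∑ⱼ (hasseDeriv j p) x · mⱼ(μ)`, and Weierstrass
approximation passes to continuous `f`. Weak convergence of `ρₙ` gives convergence of their moments
(a continuous function composed with the projection onto the support is a bounded test function),
hence of the moments of all convolution powers, hence uniform convergence of every term of `F_{ρₙ}`
and `G_{ρₙ}`. The growth bound `|f| ≤ a cosh (b ·)` bounds the `k`-th terms by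
`|e^{-λ} λᵏ / (k+1)!| · a e^{|b| L (k+1)}`, which is summable, so Tannery's theorem applies.
-/

open MeasureTheory Filter

/-- The mean real fitness of a genotype of activity `x`:
`F_ρ(x) = Σ_{k=0}^∞ (e^{−λ} λ^k / (k+1)!) · ∫ f d(δ_x ∗ ρ^{∗k})`. -/
noncomputable def meanFitnessAt (f : ℝ → ℝ) (l : ℝ) (ρ : Measure ℝ) (x : ℝ) : ℝ :=
  ∑' k : ℕ, Real.exp (-l) * l ^ k / (k + 1).factorial *
    ∫ y, f y ∂((Measure.dirac x).conv (convPow ρ k))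

/-- The population mean real fitness:
`G_ρ = Σ_{k=0}^∞ (e^{−λ} λ^k / (k+1)!) · ∫ f d(ρ^{∗(k+1)})`. -/
noncomputable def meanFitness (f : ℝ → ℝ) (l : ℝ) (ρ : Measure ℝ) : ℝ :=
  ∑' k : ℕ, Real.exp (-l) * l ^ k / (k + 1).factorial *
    ∫ y, f y ∂(convPow ρ (k + 1))

/-- Weak convergence: convergence of the integrals against every bounded
continuous test function. -/
def WeakTendsto (ρs : ℕ → Measure ℝ) (ρ : Measure ℝ) : Prop :=
  ∀ φ : ℝ → ℝ, Continuous φ → (∃ C : ℝ, ∀ x, |φ x| ≤ C) →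
    Tendsto (fun n => ∫ x, φ x ∂(ρs n)) atTop (nhds (∫ x, φ x ∂ρ))

open Set Topology ProbabilityTheory Polynomial

theorem tendstoUniformlyOn_iff_tendsto_sub {ι α G : Type*} [UniformSpace G] [AddGroup G]
    [IsUniformAddGroup G] {F : ι → α → G} {f : α → G} {p : Filter ι} {s : Set α} :
    TendstoUniformlyOn F f p s ↔
      Tendsto (fun q : ι × α => F q.1 q.2 - f q.2) (p ×ˢ 𝓟 s) (𝓝 0) := by
  rw [tendstoUniformlyOn_iff_tendsto, uniformity_eq_comap_nhds_zero G, tendsto_comap_iff]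
  rfl

theorem tendstoUniformlyOn_tsum_of_dominated_convergence {ι α β G : Type*}
    [NormedAddCommGroup G] [CompleteSpace G] {p : Filter ι} {s : Set α}
    {u : ι → β → α → G} {v : β → α → G} {bound : β → ℝ} (h_sum : Summable bound)
    (hu : ∀ k, TendstoUniformlyOn (fun n => u n k) (v k) p s)
    (hu_le : ∀ᶠ n in p, ∀ k, ∀ x ∈ s, ‖u n k x‖ ≤ bound k)
    (hv_le : ∀ k, ∀ x ∈ s, ‖v k x‖ ≤ bound k) :
    TendstoUniformlyOn (fun n x => ∑' k, u n k x) (fun x => ∑' k, v k x) p s := by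
  simp only [tendstoUniformlyOn_iff_tendsto_sub] at hu ⊢
  have h_le : ∀ᶠ q in p ×ˢ 𝓟 s, ∀ k, ‖u q.1 k q.2‖ ≤ bound k ∧ ‖v k q.2‖ ≤ bound k := by
    filter_upwards [hu_le.prod_mk (eventually_principal.mpr fun x hx => hx)] with q hq k
    exact ⟨hq.1 k q.2 hq.2, hv_le k q.2 hq.2⟩
  have h_diff := tendsto_tsum_of_dominated_convergence (h_sum.add h_sum) hu
    (h_le.mono fun q hq k => (norm_sub_le _ _).trans (add_le_add (hq k).1 (hq k).2))
  rw [tsum_zero] at h_diff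
  refine h_diff.congr' (h_le.mono fun q hq => ?_)
  exact (Summable.tsum_sub (h_sum.of_norm_bounded fun k => (hq k).1)
    (h_sum.of_norm_bounded fun k => (hq k).2))

theorem tendstoUniformlyOn_of_forall_approx {ι α β : Type*} [PseudoMetricSpace β]
    {p : Filter ι} {s : Set α} {F : ι → α → β} {f : α → β}
    (h : ∀ ε > 0, ∃ G : ι → α → β, ∃ g : α → β, TendstoUniformlyOn G g p s ∧
      (∀ n, ∀ x ∈ s, dist (F n x) (G n x) ≤ ε) ∧ ∀ x ∈ s, dist (f x) (g x) ≤ ε) :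
    TendstoUniformlyOn F f p s := by
  refine Metric.tendstoUniformlyOn_iff.mpr fun ε hε => ?_
  obtain ⟨G, g, hG, hFG, hfg⟩ := h (ε / 3) (by positivity)
  filter_upwards [Metric.tendstoUniformlyOn_iff.mp hG (ε / 3) (by positivity)] with n hn x hx
  have := dist_triangle4 (f x) (g x) (G n x) (F n x)
  linarith [hfg x hx, hn x hx, dist_comm (G n x) (F n x), hFG n x hx]

section CompactSupport

theorem Continuous.integrable_of_ae_mem_compact {X E : Type*} [TopologicalSpace X]
    [T2Space X] [MeasurableSpace X] [OpensMeasurableSpace X] [NormedAddCommGroup E]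
    {μ : Measure X} [IsFiniteMeasure μ] {K : Set X} {g : X → E} (hg : Continuous g)
    (hK : IsCompact K) (hμ : ∀ᵐ y ∂μ, y ∈ K) : Integrable g μ := by
  rw [← Measure.restrict_eq_self_of_ae_mem hμ]
  exact hg.continuousOn.integrableOn_compact hK

theorem dist_integral_le_of_ae_dist_le {X E : Type*} [MeasurableSpace X] [NormedAddCommGroup E]
    [NormedSpace ℝ E] {μ : Measure X} [IsProbabilityMeasure μ] {F G : X → E} {ε : ℝ}
    (hF : Integrable F μ) (hG : Integrable G μ) (h : ∀ᵐ y ∂μ, dist (F y) (G y) ≤ ε) :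
    dist (∫ y, F y ∂μ) (∫ y, G y ∂μ) ≤ ε := by
  rw [dist_eq_norm, ← integral_sub hF hG]
  simpa using norm_integral_le_of_norm_le_const (h.mono fun y hy => by rwa [← dist_eq_norm])

variable {μ ν : Measure ℝ}

theorem ae_mem_Icc_conv [SFinite μ] [SFinite ν] {a b c d : ℝ} (hμ : ∀ᵐ y ∂μ, y ∈ Icc a b)
    (hν : ∀ᵐ z ∂ν, z ∈ Icc c d) : ∀ᵐ t ∂μ ∗ ν, t ∈ Icc (a + c) (b + d) := by
  refine (ae_map_iff (by fun_prop) measurableSet_Icc).mpr ?_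
  filter_upwards [Measure.quasiMeasurePreserving_fst.ae hμ,
    Measure.quasiMeasurePreserving_snd.ae hν] with q hq₁ hq₂
  exact ⟨add_le_add hq₁.1 hq₂.1, add_le_add hq₁.2 hq₂.2⟩

theorem integral_eval_add_eq_sum_moment (hμ : ∀ j, Integrable (fun y : ℝ => y ^ j) μ)
    (p : ℝ[X]) (x : ℝ) :
    ∫ y, p.eval (x + y) ∂μ =
      ∑ j ∈ Finset.range (p.natDegree + 1), (p.hasseDeriv j).eval x * moment id j μ := by
  have h_taylor (y : ℝ) : p.eval (x + y) =
      ∑ j ∈ Finset.range (p.natDegree + 1), (p.hasseDeriv j).eval x * y ^ j := by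
    rw [add_comm, ← taylor_eval, eval_eq_sum_range, natDegree_taylor]
    simp only [taylor_coeff]
  simp_rw [h_taylor]
  rw [integral_finsetSum _ fun j _ => (hμ j).const_mul _]
  simp only [integral_const_mul, moment, Pi.pow_apply, id_eq]

theorem moment_conv [IsFiniteMeasure μ] [IsFiniteMeasure ν] {a b c d : ℝ}
    (hμ : ∀ᵐ y ∂μ, y ∈ Icc a b) (hν : ∀ᵐ z ∂ν, z ∈ Icc c d) (j : ℕ) :
    moment id j (μ ∗ ν) =
      ∑ i ∈ Finset.range (j + 1), moment id i μ * moment id (j - i) ν * j.choose i := by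
  have h_pow (i : ℕ) {ξ : Measure ℝ} [IsFiniteMeasure ξ] {s : Set ℝ} (hs : IsCompact s)
      (hξ : ∀ᵐ y ∂ξ, y ∈ s) : Integrable (fun y : ℝ => y ^ i) ξ :=
    (continuous_pow i).integrable_of_ae_mem_compact hs hξ
  simp only [moment, Pi.pow_apply, id_eq]
  rw [integral_conv (h_pow j isCompact_Icc (ae_mem_Icc_conv hμ hν))]
  simp_rw [add_pow]
  simp_rw [integral_finsetSum _ fun i _ =>
    ((h_pow (j - i) isCompact_Icc hν).const_mul _).mul_const _]
  simp only [integral_mul_const, integral_const_mul]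
  rw [integral_finsetSum _ fun i _ => ((h_pow i isCompact_Icc hμ).mul_const _).mul_const _]
  simp only [integral_mul_const]

end CompactSupport

section MomentConvergence

variable {ι : Type*} {l : Filter ι} {μ : Measure ℝ} {μs : ι → Measure ℝ}

theorem tendstoUniformlyOn_integral_eval_add (hμ : ∀ j, Integrable (fun y : ℝ => y ^ j) μ)
    (hμs : ∀ n j, Integrable (fun y : ℝ => y ^ j) (μs n))
    (hmom : ∀ j, Tendsto (fun n => moment id j (μs n)) l (𝓝 (moment id j μ)))
    (p : ℝ[X]) {S : Set ℝ} (hS : IsCompact S) :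
    TendstoUniformlyOn (fun n x => ∫ y, p.eval (x + y) ∂μs n)
      (fun x => ∫ y, p.eval (x + y) ∂μ) l S := by
  simp only [integral_eval_add_eq_sum_moment hμ, integral_eval_add_eq_sum_moment (hμs _),
    tendstoUniformlyOn_iff_tendsto_sub, ← Finset.sum_sub_distrib, ← mul_sub]
  have h_term (j : ℕ) : Tendsto (fun q : ι × ℝ =>
      (p.hasseDeriv j).eval q.2 * (moment id j (μs q.1) - moment id j μ)) (l ×ˢ 𝓟 S) (𝓝 0) := by
    obtain ⟨C, hC⟩ := hS.exists_bound_of_continuousOn (p.hasseDeriv j).continuous.continuousOn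
    refine isBoundedUnder_le_mul_tendsto_zero ?_ ?_
    · exact isBoundedUnder_of_eventually_le (tendsto_snd.eventually (eventually_principal.mpr hC))
    · exact tendsto_sub_nhds_zero_iff.mpr ((hmom j).comp tendsto_fst)
  simpa using tendsto_finsetSum (Finset.range _) fun j _ => h_term j

theorem tendstoUniformlyOn_integral_comp_add_of_tendsto_moment [IsProbabilityMeasure μ]
    [∀ n, IsProbabilityMeasure (μs n)] {a b c d : ℝ} (hμ : ∀ᵐ y ∂μ, y ∈ Icc a b)
    (hμs : ∀ n, ∀ᵐ y ∂μs n, y ∈ Icc a b)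
    (hmom : ∀ j, Tendsto (fun n => moment id j (μs n)) l (𝓝 (moment id j μ)))
    {f : ℝ → ℝ} (hf : Continuous f) :
    TendstoUniformlyOn (fun n x => ∫ y, f (x + y) ∂μs n)
      (fun x => ∫ y, f (x + y) ∂μ) l (Icc c d) := by
  have h_approx {ξ : Measure ℝ} [IsProbabilityMeasure ξ] (hξ : ∀ᵐ y ∂ξ, y ∈ Icc a b)
      {p : ℝ[X]} {ε : ℝ} (hp : ∀ t ∈ Icc (c + a) (d + b), |p.eval t - f t| < ε)
      {x : ℝ} (hx : x ∈ Icc c d) :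
      dist (∫ y, f (x + y) ∂ξ) (∫ y, p.eval (x + y) ∂ξ) ≤ ε := by
    refine dist_integral_le_of_ae_dist_le
      ((hf.comp (continuous_const_add x)).integrable_of_ae_mem_compact isCompact_Icc hξ)
      ((p.continuous.comp (continuous_const_add x)).integrable_of_ae_mem_compact isCompact_Icc hξ)
      (hξ.mono fun y hy => ?_)
    rw [Real.dist_eq, abs_sub_comm]
    exact (hp _ ⟨add_le_add hx.1 hy.1, add_le_add hx.2 hy.2⟩).le
  refine tendstoUniformlyOn_of_forall_approx fun ε hε => ?_
  obtain ⟨p, hp⟩ := exists_polynomial_near_of_continuousOn (c + a) (d + b) f hf.continuousOn ε hε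
  refine ⟨_, _, tendstoUniformlyOn_integral_eval_add
    (fun j => (continuous_pow j).integrable_of_ae_mem_compact isCompact_Icc hμ)
    (fun n j => (continuous_pow j).integrable_of_ae_mem_compact isCompact_Icc (hμs n))
    hmom p isCompact_Icc,
    fun n x hx => h_approx (hμs n) hp hx, fun x hx => h_approx hμ hp hx⟩

theorem tendsto_integral_of_tendsto_moment [IsProbabilityMeasure μ]
    [∀ n, IsProbabilityMeasure (μs n)] {a b : ℝ} (hμ : ∀ᵐ y ∂μ, y ∈ Icc a b)
    (hμs : ∀ n, ∀ᵐ y ∂μs n, y ∈ Icc a b)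
    (hmom : ∀ j, Tendsto (fun n => moment id j (μs n)) l (𝓝 (moment id j μ)))
    {f : ℝ → ℝ} (hf : Continuous f) :
    Tendsto (fun n => ∫ y, f y ∂μs n) l (𝓝 (∫ y, f y ∂μ)) := by
  simpa using (tendstoUniformlyOn_integral_comp_add_of_tendsto_moment (c := 0) (d := 0)
    hμ hμs hmom hf).tendsto_at (left_mem_Icc.mpr le_rfl)

theorem WeakTendsto.tendsto_integral_of_ae_mem_Icc {ρs : ℕ → Measure ℝ} {ρ : Measure ℝ}
    (h : WeakTendsto ρs ρ) [IsProbabilityMeasure ρ] {a b : ℝ} (hρ : ∀ᵐ y ∂ρ, y ∈ Icc a b)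
    (hρs : ∀ n, ∀ᵐ y ∂ρs n, y ∈ Icc a b) {g : ℝ → ℝ} (hg : Continuous g) :
    Tendsto (fun n => ∫ y, g y ∂ρs n) atTop (𝓝 (∫ y, g y ∂ρ)) := by
  obtain ⟨y₀, hy₀⟩ := hρ.exists
  have hab : a ≤ b := hy₀.1.trans hy₀.2
  obtain ⟨C, hC⟩ := (isCompact_Icc (a := a) (b := b)).exists_bound_of_continuousOn hg.continuousOn
  have h_eq {ξ : Measure ℝ} (hξ : ∀ᵐ y ∂ξ, y ∈ Icc a b) :
      ∫ y, g (projIcc a b hab y) ∂ξ = ∫ y, g y ∂ξ :=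
    integral_congr_ae (hξ.mono fun y hy => by simp [projIcc_of_mem hab hy])
  have := h (fun y => g (projIcc a b hab y)) (by fun_prop) ⟨C, fun y => hC _ (projIcc a b hab y).2⟩
  simpa only [h_eq hρ, h_eq (hρs _)] using this

end MomentConvergence

section ConvolutionPowers

instance isProbabilityMeasure_convPow (ρ : Measure ℝ) [IsProbabilityMeasure ρ] (k : ℕ) :
    IsProbabilityMeasure (convPow ρ k) := by
  induction k with
  | zero => rw [convPow]; infer_instance
  | succ k _ => rw [convPow]; infer_instance

variable {ρ : Measure ℝ} [IsProbabilityMeasure ρ]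

theorem ae_mem_Icc_convPow {a b : ℝ} (hρ : ∀ᵐ y ∂ρ, y ∈ Icc a b) (k : ℕ) :
    ∀ᵐ y ∂convPow ρ k, y ∈ Icc (k * a) (k * b) := by
  induction k with
  | zero => simp [convPow]
  | succ k ih =>
    push_cast [add_mul, one_mul]
    exact ae_mem_Icc_conv ih hρ

theorem tendsto_moment_convPow {ι : Type*} {l : Filter ι} {ρs : ι → Measure ℝ}
    [∀ n, IsProbabilityMeasure (ρs n)] {a b : ℝ} (hρ : ∀ᵐ y ∂ρ, y ∈ Icc a b)
    (hρs : ∀ n, ∀ᵐ y ∂ρs n, y ∈ Icc a b)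
    (hmom : ∀ j, Tendsto (fun n => moment id j (ρs n)) l (𝓝 (moment id j ρ))) (k j : ℕ) :
    Tendsto (fun n => moment id j (convPow (ρs n) k)) l (𝓝 (moment id j (convPow ρ k))) := by
  induction k generalizing j with
  | zero => exact tendsto_const_nhds
  | succ k ih =>
    simp only [convPow, moment_conv (ae_mem_Icc_convPow hρ k) hρ,
      moment_conv (ae_mem_Icc_convPow (hρs _) k) (hρs _)]
    exact tendsto_finsetSum _ fun i _ => ((ih i).mul (hmom (j - i))).mul_const _

end ConvolutionPowers

section Fitness

open Real Nat

theorem summable_pow_div_factorial_succ (x : ℝ) : Summable fun k : ℕ => x ^ k / (k + 1)! := by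
  refine (Real.summable_pow_div_factorial |x|).of_norm_bounded fun k => ?_
  rw [norm_div, norm_pow, Real.norm_eq_abs, Real.norm_natCast]
  gcongr
  omega

theorem summable_norm_poisson_mul_exp (l c r : ℝ) :
    Summable fun k : ℕ => ‖exp (-l) * l ^ k / (k + 1)!‖ * (c * exp (r * (k + 1))) := by
  have h_eq (k : ℕ) : ‖exp (-l) * l ^ k / (k + 1)!‖ * (c * exp (r * (k + 1))) =
      c * exp (-l) * exp r * ((|l| * exp r) ^ k / (k + 1)!) := by
    rw [norm_div, norm_mul, norm_pow, Real.norm_natCast, Real.norm_of_nonneg (exp_pos _).le,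
      Real.norm_eq_abs, show r * (k + 1) = k * r + r by ring, exp_add, exp_nat_mul]
    ring
  simpa only [h_eq] using (summable_pow_div_factorial_succ _).mul_left _

variable {f : ℝ → ℝ} {a b : ℝ}

theorem abs_le_mul_exp_of_abs_le (hbound : ∀ x, |f x| ≤ a * cosh (b * x)) {t r : ℝ}
    (ht : |t| ≤ r) : |f t| ≤ a * exp (|b| * r) := by
  have ha : 0 ≤ a :=
    (mul_nonneg_iff_of_pos_right (cosh_pos _)).mp ((abs_nonneg _).trans (hbound t))
  have h_cosh : cosh (b * t) ≤ exp |b * t| := by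
    rw [← cosh_abs, cosh_eq]
    linarith [exp_le_exp.mpr (neg_le_self (abs_nonneg (b * t)))]
  have h_exp : exp |b * t| ≤ exp (|b| * r) :=
    exp_le_exp.mpr (abs_mul b t ▸ mul_le_mul_of_nonneg_left ht (abs_nonneg b))
  calc |f t| ≤ a * cosh (b * t) := hbound t
    _ ≤ a * exp (|b| * r) := mul_le_mul_of_nonneg_left (h_cosh.trans h_exp) ha

theorem abs_integral_comp_le_mul_exp (hbound : ∀ x, |f x| ≤ a * cosh (b * x)) {ν : Measure ℝ}
    [IsProbabilityMeasure ν] {g : ℝ → ℝ} {r : ℝ} (hg : ∀ᵐ y ∂ν, |g y| ≤ r) :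
    |∫ y, f (g y) ∂ν| ≤ a * exp (|b| * r) := by
  simpa using norm_integral_le_of_norm_le_const (f := fun y => f (g y))
    (hg.mono fun y hy => abs_le_mul_exp_of_abs_le hbound hy)

variable {μ : Measure ℝ} [IsProbabilityMeasure μ] {L : ℝ}

theorem abs_integral_comp_add_convPow_le (hbound : ∀ x, |f x| ≤ a * cosh (b * x))
    (hμ : ∀ᵐ y ∂μ, y ∈ Icc 0 L) (k : ℕ) {x : ℝ} (hx : x ∈ Icc 0 L) :
    |∫ y, f (x + y) ∂convPow μ k| ≤ a * exp (|b| * L * (k + 1)) := by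
  rw [mul_assoc]
  refine abs_integral_comp_le_mul_exp hbound ((ae_mem_Icc_convPow hμ k).mono fun y hy => ?_)
  rw [mul_zero] at hy
  rw [abs_of_nonneg (add_nonneg hx.1 hy.1)]
  linarith [hx.2, hy.2]

theorem abs_integral_convPow_succ_le (hbound : ∀ x, |f x| ≤ a * cosh (b * x))
    (hμ : ∀ᵐ y ∂μ, y ∈ Icc 0 L) (k : ℕ) :
    |∫ y, f y ∂convPow μ (k + 1)| ≤ a * exp (|b| * L * (k + 1)) := by
  rw [mul_assoc]
  refine abs_integral_comp_le_mul_exp (g := id) hbound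
    ((ae_mem_Icc_convPow hμ (k + 1)).mono fun y hy => ?_)
  rw [mul_zero] at hy
  rw [id, abs_of_nonneg hy.1]
  push_cast at hy
  linarith [hy.2]

theorem meanFitnessAt_eq_tsum (l : ℝ) : meanFitnessAt f l μ =
      fun x => ∑' k : ℕ, exp (-l) * l ^ k / (k + 1)! * ∫ y, f (x + y) ∂convPow μ k := by
  ext x
  simp only [meanFitnessAt, Measure.dirac_conv, (measurableEmbedding_addLeft x).integral_map]

end Fitness

theorem mean_fitness_continuous_general
    (f : ℝ → ℝ) (hf : Continuous f)
    (a b : ℝ)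
    (hbound : ∀ x, |f x| ≤ a * Real.cosh (b * x))
    (L l : ℝ)
    (ρ : Measure ℝ) (ρs : ℕ → Measure ℝ)
    (hρ : IsProbabilityMeasure ρ) (hρs : ∀ n, IsProbabilityMeasure (ρs n))
    (hsupp : ρ (Set.Icc 0 L)ᶜ = 0) (hsupps : ∀ n, (ρs n) (Set.Icc 0 L)ᶜ = 0)
    (hconv : WeakTendsto ρs ρ) :
    TendstoUniformlyOn (fun n x => meanFitnessAt f l (ρs n) x)
      (meanFitnessAt f l ρ) atTop (Set.Icc 0 L) ∧
    Tendsto (fun n => meanFitness f l (ρs n)) atTop (nhds (meanFitness f l ρ)) := by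
  have hmom (k : ℕ) := tendsto_moment_convPow hsupp hsupps
    (fun j => hconv.tendsto_integral_of_ae_mem_Icc hsupp hsupps (continuous_pow j)) k
  have hterm (k : ℕ) : TendstoUniformlyOn (fun n x => ∫ y, f (x + y) ∂convPow (ρs n) k)
      (fun x => ∫ y, f (x + y) ∂convPow ρ k) atTop (Set.Icc 0 L) :=
    tendstoUniformlyOn_integral_comp_add_of_tendsto_moment (ae_mem_Icc_convPow hsupp k)
      (fun n => ae_mem_Icc_convPow (hsupps n) k) (hmom k) hf
  have h_sum := summable_norm_poisson_mul_exp l a (|b| * L)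
  constructor
  · simp only [meanFitnessAt_eq_tsum]
    refine tendstoUniformlyOn_tsum_of_dominated_convergence h_sum
      (fun k => (uniformContinuous_const_smul (M := ℝ) _).comp_tendstoUniformlyOn (hterm k))
      (.of_forall fun n k x hx => ?_) fun k x hx => ?_
    · exact norm_mul_le_of_le le_rfl (abs_integral_comp_add_convPow_le hbound (hsupps n) k hx)
    · exact norm_mul_le_of_le le_rfl (abs_integral_comp_add_convPow_le hbound hsupp k hx)
  · refine tendsto_tsum_of_dominated_convergence h_sum (fun k => ?_)
      (.of_forall fun n k =>
        norm_mul_le_of_le le_rfl (abs_integral_convPow_succ_le hbound (hsupps n) k))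
    exact (tendsto_integral_of_tendsto_moment (ae_mem_Icc_convPow hsupp (k + 1))
      (fun n => ae_mem_Icc_convPow (hsupps n) (k + 1)) (hmom (k + 1)) hf).const_mul _

theorem mean_fitness_continuous
    (f : ℝ → ℝ) (hf : Continuous f)
    (a b : ℝ) (ha : 0 < a)
    (hbound : ∀ x, |f x| ≤ a * Real.cosh (b * x))
    (L l : ℝ) (hL : 0 < L) (hl : 0 < l)
    (ρ : Measure ℝ) (ρs : ℕ → Measure ℝ)
    (hρ : IsProbabilityMeasure ρ) (hρs : ∀ n, IsProbabilityMeasure (ρs n))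
    (hsupp : ρ (Set.Icc 0 L)ᶜ = 0) (hsupps : ∀ n, (ρs n) (Set.Icc 0 L)ᶜ = 0)
    (hconv : WeakTendsto ρs ρ) :
    TendstoUniformlyOn (fun n x => meanFitnessAt f l (ρs n) x)
      (meanFitnessAt f l ρ) atTop (Set.Icc 0 L) ∧
    Tendsto (fun n => meanFitness f l (ρs n)) atTop (nhds (meanFitness f l ρ)) :=
  mean_fitness_continuous_general f hf a b hbound L l ρ ρs hρ hρs hsupp hsupps hconv
end

section
/- Let λ ≥ 0 and let ρ₀ be a compactly supported probability measure on [0, ∞) with ∫ x dρ₀ > 0. Define the iterates ρ_{t+1} = A(ρ_t) for t ∈ ℕ, and set x₀ = sup(supp ρ₀). Then ρ_t → δ_{x₀} weakly as t → ∞ (i.e. ∫ φ dρ_t → φ(x₀) for every bounded continuous φ : ℝ → ℝ), and the means x̄_t = ∫ x dρ_t form a nondecreasing sequence converging to x₀. In other words, the best genotype is always selected in the limit, for every mean occupancy λ. -/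
/-!
The update reweights `ρ` by `w(x) = 1 - g + g x / x̄` with `0 < g ≤ 1`, an increasing affine
function of `x`. Hence each `ρ_t` is a probability measure on `[0, x₀]`, and the mean grows
by `g · Var(ρ_t) / x̄_t ≥ 0`. For `c < d` the ratio `w(c) / w(d)` increases with `x̄`, so it
is at most its value `θ < 1` at `x̄ = x₀`; comparing the masses of `(-∞, c]` and `[d, ∞)`
step by step gives `ρ_t(-∞, c] · ρ_0[d, ∞) ≤ θ ^ t`. With `d < x₀ ∈ supp ρ_0` this makes
the mass outside every ball around `x₀` tend to `0`, which is weak convergence to `δ_{x₀}`;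
the means converge because `x` agrees on `[0, x₀]` with the bounded continuous function
`x ↦ min (max x 0) x₀`.
-/

open MeasureTheory Filter

/-- The retardation factor `g(λ) = (1 - e^{-λ})/λ` (with the convention `g(0) = 1`). -/
noncomputable def gFactor (l : ℝ) : ℝ := if l = 0 then 1 else (1 - Real.exp (-l)) / l

/-- The selection update operator: `A(ρ)` is the measure with density
`x ↦ 1 - g(λ) + g(λ)·x/x̄` with respect to `ρ`, where `x̄ = ∫ x dρ`. -/
noncomputable def updateA (l : ℝ) (ρ : Measure ℝ) : Measure ℝ :=
  ρ.withDensity (fun x =>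
    ENNReal.ofReal (1 - gFactor l + gFactor l * x / ∫ y, y ∂ρ))

/-- The topological support of a measure on `ℝ`: the set of points all of whose
neighbourhoods have nonzero measure. -/
def msupp (μ : Measure ℝ) : Set ℝ := {x | ∀ U ∈ nhds x, μ U ≠ 0}

open Set ProbabilityTheory Topology
open scoped ENNReal

lemma msupp_eq_support (μ : Measure ℝ) : msupp μ = μ.support := by
  ext x
  simp [msupp, Measure.mem_support_iff_forall, pos_iff_ne_zero]

lemma ae_le_csSup_support {μ : Measure ℝ} (h : BddAbove μ.support) :
    ∀ᵐ x ∂μ, x ≤ sSup μ.support :=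
  Filter.mem_of_superset Measure.support_mem_ae fun _ hx => le_csSup h hx

section WithDensity

variable {α : Type*} [MeasurableSpace α] {μ : Measure α} {f : α → ℝ≥0∞} {s : Set α}
  {c : ℝ≥0∞}

lemma withDensity_apply_le_mul (hs : MeasurableSet s) (hf : ∀ x ∈ s, f x ≤ c) :
    μ.withDensity f s ≤ c * μ s := by
  rw [withDensity_apply _ hs, ← setLIntegral_const]
  exact setLIntegral_mono' hs hf

lemma mul_le_withDensity_apply (hs : MeasurableSet s) (hf : ∀ x ∈ s, c ≤ f x) :
    c * μ s ≤ μ.withDensity f s := by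
  rw [withDensity_apply _ hs, ← setLIntegral_const]
  exact setLIntegral_mono' hs hf

end WithDensity

section RatioContraction

variable {x y a c : ℕ → ℝ≥0∞} {θ : ℝ≥0∞}

lemma mul_le_pow_mul_of_le_mul_of_mul_le (hx : ∀ t, x (t + 1) ≤ a t * x t)
    (hy : ∀ t, c t * y t ≤ y (t + 1)) (hac : ∀ t, a t ≤ θ * c t) (t : ℕ) :
    x t * y 0 ≤ θ ^ t * (x 0 * y t) := by
  induction t with
  | zero => simp
  | succ t ih =>
    calc x (t + 1) * y 0 ≤ θ * c t * (x t * y 0) := by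
          rw [← mul_assoc]; gcongr; exact (hx t).trans (by gcongr; exact hac t)
      _ ≤ θ * c t * (θ ^ t * (x 0 * y t)) := by gcongr
      _ = θ ^ (t + 1) * (x 0 * (c t * y t)) := by ring
      _ ≤ θ ^ (t + 1) * (x 0 * y (t + 1)) := by gcongr; exact hy t

lemma tendsto_zero_of_le_mul_of_mul_le (hx : ∀ t, x (t + 1) ≤ a t * x t)
    (hy : ∀ t, c t * y t ≤ y (t + 1)) (hac : ∀ t, a t ≤ θ * c t) (hθ : θ < 1)
    (hx₀ : x 0 ≤ 1) (hy₁ : ∀ t, y t ≤ 1) (hy₀ : y 0 ≠ 0) :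
    Tendsto x atTop (𝓝 0) := by
  have hbound : ∀ t, x t ≤ θ ^ t / y 0 := fun t => by
    have hy₀' : y 0 ≠ ⊤ := ne_top_of_le_ne_top ENNReal.one_ne_top (hy₁ 0)
    rw [ENNReal.le_div_iff_mul_le (Or.inl hy₀) (Or.inl hy₀')]
    calc x t * y 0 ≤ θ ^ t * (x 0 * y t) := mul_le_pow_mul_of_le_mul_of_mul_le hx hy hac t
      _ ≤ θ ^ t * (1 * 1) := by gcongr; exact hy₁ t
      _ = θ ^ t := by simp
  have hlim : Tendsto (fun t => θ ^ t / y 0) atTop (𝓝 0) := by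
    simpa using
      ENNReal.Tendsto.div_const (ENNReal.tendsto_pow_atTop_nhds_zero_of_lt_one hθ) (Or.inr hy₀)
  exact tendsto_of_tendsto_of_tendsto_of_le_of_le tendsto_const_nhds hlim (fun _ => zero_le)
    hbound

end RatioContraction

section WeakConvergence

variable {X : Type*} [MeasurableSpace X]

lemma abs_integral_sub_le {μ : Measure X} [IsProbabilityMeasure μ] {φ : X → ℝ} {s : Set X}
    {a ε M : ℝ} (hφ : Integrable φ μ) (hs : MeasurableSet s) (hε : 0 ≤ ε)
    (hφs : ∀ x ∈ s, |φ x - a| ≤ ε) (hφM : ∀ x, |φ x - a| ≤ M) :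
    |∫ x, φ x ∂μ - a| ≤ ε + M * μ.real sᶜ := by
  have hint : Integrable (fun x => φ x - a) μ := hφ.sub (integrable_const a)
  have hind : Integrable (sᶜ.indicator fun _ => M) μ := (integrable_const M).indicator hs.compl
  calc |∫ x, φ x ∂μ - a| = |∫ x, (φ x - a) ∂μ| := by
        rw [integral_sub hφ (integrable_const a)]
        simp
    _ ≤ ∫ x, |φ x - a| ∂μ := abs_integral_le_integral_abs
    _ ≤ ∫ x, (ε + sᶜ.indicator (fun _ => M) x) ∂μ := by
        refine integral_mono hint.abs ((integrable_const ε).add hind) fun x => ?_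
        by_cases hx : x ∈ s
        · simpa [hx] using hφs x hx
        · simpa [hx] using (hφM x).trans (le_add_of_nonneg_left hε)
    _ = ε + M * μ.real sᶜ := by
        rw [integral_add (integrable_const ε) hind, integral_indicator_const M hs.compl]
        simp [mul_comm]

lemma tendsto_integral_of_tendsto_measure_compl_ball [PseudoMetricSpace X]
    [OpensMeasurableSpace X] {ι : Type*} {L : Filter ι} {μ : ι → Measure X}
    [∀ i, IsProbabilityMeasure (μ i)] {x₀ : X}
    (hμ : ∀ δ > 0, Tendsto (fun i => μ i (Metric.ball x₀ δ)ᶜ) L (𝓝 0)) {φ : X → ℝ}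
    (hφ : Continuous φ) {C : ℝ} (hC : ∀ x, |φ x| ≤ C) :
    Tendsto (fun i => ∫ x, φ x ∂μ i) L (𝓝 (φ x₀)) := by
  rw [Metric.tendsto_nhds]
  intro η hη
  obtain ⟨δ, hδ, hφδ⟩ := Metric.continuousAt_iff.1 hφ.continuousAt (η / 2) (half_pos hη)
  have hreal : Tendsto (fun i => (μ i).real (Metric.ball x₀ δ)ᶜ) L (𝓝 0) := by
    simpa [Function.comp_def, measureReal_def] using
      (ENNReal.tendsto_toReal ENNReal.zero_ne_top).comp (hμ δ hδ)
  filter_upwards [(hreal.const_mul (2 * C)).eventually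
    (gt_mem_nhds (by rw [mul_zero]; exact half_pos hη))] with i hi
  have hφM : ∀ x, |φ x - φ x₀| ≤ 2 * C := fun x =>
    (abs_sub _ _).trans (by linarith [hC x, hC x₀])
  calc dist (∫ x, φ x ∂μ i) (φ x₀)
      ≤ η / 2 + 2 * C * (μ i).real (Metric.ball x₀ δ)ᶜ :=
        abs_integral_sub_le (.of_bound hφ.aestronglyMeasurable C (ae_of_all _ hC))
          Metric.isOpen_ball.measurableSet (half_pos hη).le (fun x hx => (hφδ hx).le) hφM
    _ < η := by linarith

end WeakConvergence

lemma tendsto_integral_id_of_tendsto_integral {ι : Type*} {L : Filter ι} {μ : ι → Measure ℝ}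
    {a b x₀ : ℝ} (hμ : ∀ i, ∀ᵐ x ∂μ i, x ∈ Icc a b) (hx₀ : x₀ ∈ Icc a b)
    (hφ : ∀ φ : ℝ → ℝ, Continuous φ → (∃ C : ℝ, ∀ x, |φ x| ≤ C) →
      Tendsto (fun i => ∫ x, φ x ∂μ i) L (𝓝 (φ x₀))) :
    Tendsto (fun i => ∫ x, x ∂μ i) L (𝓝 x₀) := by
  have hab : a ≤ b := hx₀.1.trans hx₀.2
  have hclamp := hφ (fun x => projIcc a b hab x) (continuous_subtype_val.comp continuous_projIcc)
    ⟨max |a| |b|, fun x => abs_le_max_abs_abs (projIcc a b hab x).2.1 (projIcc a b hab x).2.2⟩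
  rw [projIcc_of_mem hab hx₀] at hclamp
  refine hclamp.congr fun i => integral_congr_ae ?_
  filter_upwards [hμ i] with x hx
  rw [projIcc_of_mem hab hx]

lemma gFactor_pos (l : ℝ) : 0 < gFactor l := by
  unfold gFactor
  split_ifs with h
  · exact one_pos
  rcases lt_or_gt_of_ne h with hl | hl
  · exact div_pos_of_neg_of_neg (by linarith [Real.one_lt_exp_iff.2 (neg_pos.2 hl)]) hl
  · exact div_pos (by linarith [Real.exp_lt_one_iff.2 (neg_neg_of_pos hl)]) hl

lemma gFactor_le_one {l : ℝ} (hl : 0 ≤ l) : gFactor l ≤ 1 := by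
  unfold gFactor
  split_ifs with h
  · exact le_rfl
  rw [div_le_one (lt_of_le_of_ne hl (Ne.symm h))]
  linarith [Real.add_one_le_exp (-l)]

noncomputable def selectionDensity (l m x : ℝ) : ℝ := 1 - gFactor l + gFactor l * x / m

lemma updateA_eq_withDensity (l : ℝ) (μ : Measure ℝ) :
    updateA l μ = μ.withDensity fun x => ENNReal.ofReal (selectionDensity l (∫ y, y ∂μ) x) :=
  rfl

section SelectionDensity

variable {l m : ℝ}

lemma selectionDensity_eq (hm : m ≠ 0) (x : ℝ) :
    selectionDensity l m x = ((1 - gFactor l) * m + gFactor l * x) / m := by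
  unfold selectionDensity
  field_simp

lemma selectionDensity_strictMono (hm : 0 < m) : StrictMono (selectionDensity l m) :=
  fun x y hxy => by
    unfold selectionDensity
    have := gFactor_pos l
    gcongr

lemma selectionDensity_nonneg (hl : 0 ≤ l) (hm : 0 < m) {x : ℝ} (hx : 0 ≤ x) :
    0 ≤ selectionDensity l m x := by
  unfold selectionDensity
  have := gFactor_le_one hl
  have : 0 ≤ gFactor l * x / m := by have := gFactor_pos l; positivity
  linarith

lemma selectionDensity_pos (hl : 0 ≤ l) (hm : 0 < m) {x : ℝ} (hx : 0 < x) :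
    0 < selectionDensity l m x :=
  (selectionDensity_nonneg hl hm le_rfl).trans_lt (selectionDensity_strictMono hm hx)

lemma selectionDensity_mul_le_mul (hl : 0 ≤ l) (hm : 0 < m) {m' c d : ℝ} (hmm' : m ≤ m')
    (hcd : c ≤ d) :
    selectionDensity l m c * selectionDensity l m' d ≤
      selectionDensity l m' c * selectionDensity l m d := by
  have hm' : 0 < m' := hm.trans_le hmm'
  simp only [selectionDensity_eq hm.ne', selectionDensity_eq hm'.ne', div_mul_div_comm,
    mul_comm m' m]
  have hg := gFactor_pos l
  have hg1 := gFactor_le_one hl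
  gcongr ?_ / _
  nlinarith [mul_nonneg (mul_nonneg hg.le (sub_nonneg.2 hg1))
    (mul_nonneg (sub_nonneg.2 hmm') (sub_nonneg.2 hcd))]

lemma measurable_selectionDensity : Measurable (selectionDensity l m) := by
  unfold selectionDensity
  fun_prop

end SelectionDensity

section Update

variable {l : ℝ} {μ : Measure ℝ}

lemma integrable_selectionDensity [IsFiniteMeasure μ] (hμ : Integrable (fun x => x) μ)
    (m : ℝ) :
    Integrable (selectionDensity l m) μ := by
  unfold selectionDensity
  simp only [mul_div_right_comm (gFactor l)]
  exact (integrable_const _).add (hμ.const_mul _)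

lemma integral_selectionDensity [IsProbabilityMeasure μ] (hμ : Integrable (fun x => x) μ)
    (hm : ∫ x, x ∂μ ≠ 0) : ∫ x, selectionDensity l (∫ y, y ∂μ) x ∂μ = 1 := by
  simp only [selectionDensity, mul_div_right_comm (gFactor l)]
  rw [integral_add (integrable_const _) (hμ.const_mul _), integral_const, integral_const_mul,
    div_mul_cancel₀ _ hm]
  simp

lemma integral_selectionDensity_mul [IsProbabilityMeasure μ] (hμ : MemLp id 2 μ)
    (hm : ∫ x, x ∂μ ≠ 0) :
    ∫ x, selectionDensity l (∫ y, y ∂μ) x * x ∂μ =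
      ∫ x, x ∂μ + gFactor l / (∫ x, x ∂μ) * variance id μ := by
  have hsq : Integrable (fun x : ℝ => x ^ 2) μ := hμ.integrable_sq
  have hid : Integrable (fun x : ℝ => x) μ := hμ.integrable one_le_two
  have hexp : (fun x => selectionDensity l (∫ y, y ∂μ) x * x) =
      fun x => (1 - gFactor l) * x + gFactor l / (∫ y, y ∂μ) * x ^ 2 := by
    ext x; unfold selectionDensity; ring
  rw [hexp, integral_add (hid.const_mul _) (hsq.const_mul _), integral_const_mul,
    integral_const_mul, variance_eq_sub hμ]
  simp only [Pi.pow_apply, id]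
  field_simp
  ring

lemma ae_selectionDensity_nonneg (hl : 0 ≤ l) (hnonneg : ∀ᵐ x ∂μ, 0 ≤ x)
    (hm : 0 < ∫ x, x ∂μ) : ∀ᵐ x ∂μ, 0 ≤ selectionDensity l (∫ y, y ∂μ) x := by
  filter_upwards [hnonneg] with x hx using selectionDensity_nonneg hl hm hx

variable [IsProbabilityMeasure μ]

lemma isProbabilityMeasure_updateA (hl : 0 ≤ l) (hnonneg : ∀ᵐ x ∂μ, 0 ≤ x)
    (hm : 0 < ∫ x, x ∂μ) (hμ : Integrable (fun x => x) μ) :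
    IsProbabilityMeasure (updateA l μ) := by
  constructor
  rw [updateA_eq_withDensity, withDensity_apply _ MeasurableSet.univ, Measure.restrict_univ,
    ← ofReal_integral_eq_lintegral_ofReal (integrable_selectionDensity hμ _)
      (ae_selectionDensity_nonneg hl hnonneg hm),
    integral_selectionDensity hμ hm.ne', ENNReal.ofReal_one]

lemma integral_updateA (hl : 0 ≤ l) (hnonneg : ∀ᵐ x ∂μ, 0 ≤ x) (hm : 0 < ∫ x, x ∂μ)
    (hμ : MemLp id 2 μ) :
    ∫ x, x ∂(updateA l μ) =
      ∫ x, x ∂μ + gFactor l / (∫ x, x ∂μ) * variance id μ := by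
  rw [updateA_eq_withDensity, integral_withDensity_eq_integral_toReal_smul
    measurable_selectionDensity.ennreal_ofReal (ae_of_all _ fun _ => ENNReal.ofReal_lt_top),
    ← integral_selectionDensity_mul hμ hm.ne']
  refine integral_congr_ae ?_
  filter_upwards [ae_selectionDensity_nonneg hl hnonneg hm] with x hx
  rw [ENNReal.toReal_ofReal hx, smul_eq_mul]

lemma integral_le_integral_updateA (hl : 0 ≤ l) (hnonneg : ∀ᵐ x ∂μ, 0 ≤ x)
    (hm : 0 < ∫ x, x ∂μ) (hμ : MemLp id 2 μ) :
    ∫ x, x ∂μ ≤ ∫ x, x ∂(updateA l μ) := by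
  rw [integral_updateA hl hnonneg hm hμ]
  have := div_pos (gFactor_pos l) hm
  have := variance_nonneg id μ
  nlinarith

end Update

structure IsFitnessDistribution (b : ℝ) (μ : Measure ℝ) : Prop where
  isProbabilityMeasure : IsProbabilityMeasure μ
  ae_mem_Icc : ∀ᵐ x ∂μ, x ∈ Icc 0 b
  integral_pos : 0 < ∫ x, x ∂μ

namespace IsFitnessDistribution

variable {b l : ℝ} {μ : Measure ℝ}

lemma ae_nonneg (hμ : IsFitnessDistribution b μ) : ∀ᵐ x ∂μ, 0 ≤ x :=
  hμ.ae_mem_Icc.mono fun _ hx => hx.1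

lemma memLp (hμ : IsFitnessDistribution b μ) (p : ℝ≥0∞) : MemLp id p μ :=
  have := hμ.isProbabilityMeasure
  MemLp.of_bound measurable_id.aestronglyMeasurable b <| hμ.ae_mem_Icc.mono fun x hx => by
    rw [id, Real.norm_eq_abs, abs_le]
    exact ⟨by linarith [hx.1, hx.2], hx.2⟩

lemma integrable (hμ : IsFitnessDistribution b μ) : Integrable (fun x => x) μ :=
  memLp_one_iff_integrable.1 (hμ.memLp 1)

lemma integral_le (hμ : IsFitnessDistribution b μ) : ∫ x, x ∂μ ≤ b := by
  have := hμ.isProbabilityMeasure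
  calc ∫ x, x ∂μ ≤ ∫ _, b ∂μ :=
        integral_mono_ae hμ.integrable (integrable_const b)
          (hμ.ae_mem_Icc.mono fun _ hx => hx.2)
    _ = b := by simp

lemma pos (hμ : IsFitnessDistribution b μ) : 0 < b :=
  hμ.integral_pos.trans_le hμ.integral_le

lemma integral_le_integral_updateA (hl : 0 ≤ l) (hμ : IsFitnessDistribution b μ) :
    ∫ x, x ∂μ ≤ ∫ x, x ∂(updateA l μ) :=
  have := hμ.isProbabilityMeasure
  _root_.integral_le_integral_updateA hl hμ.ae_nonneg hμ.integral_pos (hμ.memLp 2)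

lemma updateA (hl : 0 ≤ l) (hμ : IsFitnessDistribution b μ) :
    IsFitnessDistribution b (updateA l μ) where
  isProbabilityMeasure :=
    have := hμ.isProbabilityMeasure
    isProbabilityMeasure_updateA hl hμ.ae_nonneg hμ.integral_pos hμ.integrable
  ae_mem_Icc := (withDensity_absolutelyContinuous _ _).ae_le hμ.ae_mem_Icc
  integral_pos := hμ.integral_pos.trans_le (hμ.integral_le_integral_updateA hl)

end IsFitnessDistribution

lemma isFitnessDistribution_csSup_support {μ : Measure ℝ} [IsProbabilityMeasure μ]
    (hbdd : BddAbove μ.support) (hpos : μ (Iio 0) = 0) (hmean : 0 < ∫ x, x ∂μ) :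
    IsFitnessDistribution (sSup μ.support) μ where
  isProbabilityMeasure := ‹_›
  ae_mem_Icc := by
    filter_upwards [measure_eq_zero_iff_ae_notMem.1 hpos, ae_le_csSup_support hbdd] with x h0 hx
    exact ⟨not_lt.1 h0, hx⟩
  integral_pos := hmean

section Iterates

variable {l b : ℝ} {ρ : ℕ → Measure ℝ}

lemma isFitnessDistribution_iterate (hl : 0 ≤ l) (hstep : ∀ t, ρ (t + 1) = updateA l (ρ t))
    (h0 : IsFitnessDistribution b (ρ 0)) : ∀ t, IsFitnessDistribution b (ρ t)
  | 0 => h0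
  | t + 1 => hstep t ▸ (isFitnessDistribution_iterate hl hstep h0 t).updateA hl

lemma monotone_integral_iterate (hl : 0 ≤ l) (hstep : ∀ t, ρ (t + 1) = updateA l (ρ t))
    (hρ : ∀ t, IsFitnessDistribution b (ρ t)) : Monotone fun t => ∫ x, x ∂(ρ t) :=
  monotone_nat_of_le_succ fun t => hstep t ▸ (hρ t).integral_le_integral_updateA hl

lemma tendsto_measure_Iic_iterate (hl : 0 ≤ l) (hstep : ∀ t, ρ (t + 1) = updateA l (ρ t))
    (hρ : ∀ t, IsFitnessDistribution b (ρ t)) {c d : ℝ} (hcd : c < d) (hd : 0 < d)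
    (h₀ : ρ 0 (Ici d) ≠ 0) : Tendsto (fun t => ρ t (Iic c)) atTop (𝓝 0) := by
  have := fun t => (hρ t).isProbabilityMeasure
  have hb := (hρ 0).pos
  have hwd : 0 < selectionDensity l b d := selectionDensity_pos hl hb hd
  refine tendsto_zero_of_le_mul_of_mul_le (y := fun t => ρ t (Ici d))
    (a := fun t => ENNReal.ofReal (selectionDensity l (∫ x, x ∂ρ t) c))
    (c := fun t => ENNReal.ofReal (selectionDensity l (∫ x, x ∂ρ t) d))
    (θ := ENNReal.ofReal (selectionDensity l b c / selectionDensity l b d))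
    (fun t => ?_) (fun t => ?_) (fun t => ?_) ?_ prob_le_one (fun _ => prob_le_one) h₀
  · rw [hstep, updateA_eq_withDensity]
    exact withDensity_apply_le_mul measurableSet_Iic fun x hx => ENNReal.ofReal_le_ofReal <|
      (selectionDensity_strictMono (hρ t).integral_pos).monotone hx
  · rw [hstep, updateA_eq_withDensity]
    exact mul_le_withDensity_apply measurableSet_Ici fun x hx => ENNReal.ofReal_le_ofReal <|
      (selectionDensity_strictMono (hρ t).integral_pos).monotone hx
  · rw [← ENNReal.ofReal_mul' (selectionDensity_pos hl (hρ t).integral_pos hd).le]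
    refine ENNReal.ofReal_le_ofReal ?_
    rw [div_mul_eq_mul_div, le_div_iff₀ hwd]
    exact selectionDensity_mul_le_mul hl (hρ t).integral_pos (hρ t).integral_le hcd.le
  · rw [ENNReal.ofReal_lt_one, div_lt_one hwd]
    exact selectionDensity_strictMono hb hcd

lemma tendsto_measure_compl_ball_iterate (hl : 0 ≤ l)
    (hstep : ∀ t, ρ (t + 1) = updateA l (ρ t)) (hρ : ∀ t, IsFitnessDistribution b (ρ t))
    (hb : b ∈ (ρ 0).support) {δ : ℝ} (hδ : 0 < δ) :
    Tendsto (fun t => ρ t (Metric.ball b δ)ᶜ) atTop (𝓝 0) := by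
  have hb₀ := (hρ 0).pos
  have hd : b - min δ b / 2 < b := by have := lt_min hδ hb₀; linarith
  have h₀ : ρ 0 (Ici (b - min δ b / 2)) ≠ 0 :=
    (((Measure.mem_support_iff_forall b).1 hb _ (Ioi_mem_nhds hd)).trans_le
      (measure_mono Ioi_subset_Ici_self)).ne'
  refine tendsto_of_tendsto_of_tendsto_of_le_of_le tendsto_const_nhds
    (tendsto_measure_Iic_iterate hl hstep hρ (c := b - δ) (by linarith [min_le_left δ b])
      (by linarith [min_le_right δ b]) h₀) (fun _ => zero_le) (fun t => measure_mono_ae ?_)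
  filter_upwards [(hρ t).ae_mem_Icc] with x hx (hxball : x ∉ Metric.ball b δ)
  simp only [Metric.mem_ball, Real.dist_eq, abs_sub_lt_iff, not_and_or, not_lt] at hxball
  show x ≤ b - δ
  rcases hxball with h | h <;> linarith [hx.2]

end Iterates

/-- The best genotype is always selected in the limit, for every mean occupancy. -/
theorem best_genotype_always_selected
    (l : ℝ) (hl : 0 ≤ l)
    (ρ₀ : Measure ℝ) (hρ₀ : IsProbabilityMeasure ρ₀)
    (K : Set ℝ) (hK : IsCompact K) (hsupp : ρ₀ Kᶜ = 0)
    (hpos : ρ₀ (Set.Iio 0) = 0)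
    (hmean : 0 < ∫ x, x ∂ρ₀)
    (ρ : ℕ → Measure ℝ) (h0 : ρ 0 = ρ₀)
    (hstep : ∀ t : ℕ, ρ (t + 1) = updateA l (ρ t)) :
    (∀ φ : ℝ → ℝ, Continuous φ → (∃ C : ℝ, ∀ x, |φ x| ≤ C) →
      Tendsto (fun t => ∫ x, φ x ∂(ρ t)) atTop (nhds (φ (sSup (msupp ρ₀))))) ∧
    Monotone (fun t => ∫ x, x ∂(ρ t)) ∧
    Tendsto (fun t => ∫ x, x ∂(ρ t)) atTop (nhds (sSup (msupp ρ₀))) := by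
  rw [msupp_eq_support]
  subst h0
  have hbdd : BddAbove (ρ 0).support :=
    hK.bddAbove.mono (Measure.support_subset_of_isClosed hK.isClosed (mem_ae_iff.2 hsupp))
  have hx₀ : sSup (ρ 0).support ∈ (ρ 0).support := Measure.isClosed_support.csSup_mem
    (Measure.nonempty_support (IsProbabilityMeasure.ne_zero _)) hbdd
  have hρ := isFitnessDistribution_iterate hl hstep
    (isFitnessDistribution_csSup_support hbdd hpos hmean)
  have := fun t => (hρ t).isProbabilityMeasure
  have hweak : ∀ φ : ℝ → ℝ, Continuous φ → (∃ C : ℝ, ∀ x, |φ x| ≤ C) →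
      Tendsto (fun t => ∫ x, φ x ∂(ρ t)) atTop (𝓝 (φ (sSup (ρ 0).support))) :=
    fun φ hφ ⟨C, hC⟩ => tendsto_integral_of_tendsto_measure_compl_ball
      (fun _ hδ => tendsto_measure_compl_ball_iterate hl hstep hρ hx₀ hδ) hφ hC
  exact ⟨hweak, monotone_integral_iterate hl hstep hρ,
    tendsto_integral_id_of_tendsto_integral (fun t => (hρ t).ae_mem_Icc)
      ⟨(hρ 0).pos.le, le_rfl⟩ hweak⟩
end
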